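/- arXiv:1501.01113 — 4 statements merged into one kernel-verified Lean document; each statement's English description precedes it below -/
import Mathlib

section
/- For 1 ≤ q < ∞, the space L_q(Δ) = {x : ℕ × ℕ → ℝ : Σ_{m,n} |(Δx)_{mn}|^q < ∞} equipped with the norm ‖x‖ = (Σ_{m,n} |(Δx)_{mn}|^q)^{1/q} is a complete normed space: every Cauchy sequence (x^{(r)}) in this norm converges to some x in L_q(Δ). -/
/-- Double difference operator: terms with a negative index are taken to be 0. -/
noncomputable def dDelta (x : ℕ → ℕ → ℝ) (m n : ℕ) : ℝ :=
  x m n - (if n = 0 then 0 else x m (n - 1)) - (if m = 0 then 0 else x (m - 1) n)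
    + (if m = 0 ∨ n = 0 then 0 else x (m - 1) (n - 1))

/-- Rectangular partial-sum (summation) operator. -/
noncomputable def dSum (y : ℕ → ℕ → ℝ) (j k : ℕ) : ℝ :=
  ∑ m ∈ Finset.range (j + 1), ∑ n ∈ Finset.range (k + 1), y m n

/-- Pringsheim convergence of a double sequence to `l`. -/
def PrTendsto (x : ℕ → ℕ → ℝ) (l : ℝ) : Prop :=
  ∀ ε > 0, ∃ N : ℕ, ∀ m n : ℕ, N < m → N < n → |x m n - l| < ε

lemma dDelta_sub (a b : ℕ → ℕ → ℝ) (m n : ℕ) :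
    dDelta (fun i j => a i j - b i j) m n = dDelta a m n - dDelta b m n := by
  unfold dDelta
  split_ifs <;> ring

lemma dDelta_dSum (y : ℕ → ℕ → ℝ) (m n : ℕ) :
    dDelta (fun i j => dSum y i j) m n = y m n := by
  cases m <;> cases n <;>
    simp [dDelta, dSum, Finset.sum_range_succ, Finset.sum_add_distrib] <;> ring

theorem LqDelta_complete (q : ℝ) (hq : 1 ≤ q) (x : ℕ → (ℕ → ℕ → ℝ))
    (hmem : ∀ r : ℕ, Summable fun p : ℕ × ℕ => |dDelta (x r) p.1 p.2| ^ q)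
    (hcauchy : ∀ ε > (0 : ℝ), ∃ N : ℕ, ∀ r s : ℕ, N ≤ r → N ≤ s →
      (∑' p : ℕ × ℕ, |dDelta (fun i j => x r i j - x s i j) p.1 p.2| ^ q) ^ (1 / q) < ε) :
    ∃ xlim : ℕ → ℕ → ℝ,
      (Summable fun p : ℕ × ℕ => |dDelta xlim p.1 p.2| ^ q) ∧
      Filter.Tendsto
        (fun r => (∑' p : ℕ × ℕ,
          |dDelta (fun i j => x r i j - xlim i j) p.1 p.2| ^ q) ^ (1 / q))
        Filter.atTop (nhds 0) := by
  set P : ENNReal := ENNReal.ofReal q with hP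
  have hq0 : (0 : ℝ) < q := lt_of_lt_of_le one_pos hq
  have hPt : P.toReal = q := ENNReal.toReal_ofReal hq0.le
  have hPpos : 0 < P.toReal := by rw [hPt]; exact hq0
  haveI : Fact (1 ≤ P) := ⟨ENNReal.one_le_ofReal.mpr hq⟩
  -- the sequence in lp
  have hF : ∀ r, Memℓp (fun p : ℕ × ℕ => dDelta (x r) p.1 p.2) P := by
    intro r
    apply memℓp_gen
    rw [hPt]
    simpa [Real.norm_eq_abs] using hmem r
  set F : ℕ → lp (fun _ : ℕ × ℕ => ℝ) P := fun r => ⟨_, hF r⟩ with hFdef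
  have hnorm : ∀ r s : ℕ, ‖F r - F s‖ =
      (∑' p : ℕ × ℕ, |dDelta (fun i j => x r i j - x s i j) p.1 p.2| ^ q) ^ (1 / q) := by
    intro r s
    rw [lp.norm_eq_tsum_rpow hPpos, hPt]
    congr 1
    apply tsum_congr
    intro p
    rw [dDelta_sub]
    simp [hFdef, Real.norm_eq_abs, Pi.sub_apply]
    rfl
  have hcs : CauchySeq F := by
    rw [Metric.cauchySeq_iff]
    intro ε hε
    obtain ⟨N, hN⟩ := hcauchy ε hε
    exact ⟨N, fun r hr s hs => by
      rw [dist_eq_norm, hnorm]; exact hN r s hr hs⟩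
  obtain ⟨G, hG⟩ := cauchySeq_tendsto_of_complete hcs
  refine ⟨fun i j => dSum (fun a b => G (a, b)) i j, ?_, ?_⟩
  · have := (lp.memℓp G).summable hPpos
    rw [hPt] at this
    simpa [dDelta_dSum, Real.norm_eq_abs] using this
  · have key : ∀ r, (∑' p : ℕ × ℕ,
        |dDelta (fun i j => x r i j - dSum (fun a b => G (a, b)) i j) p.1 p.2| ^ q) ^ (1 / q)
        = ‖F r - G‖ := by
      intro r
      rw [lp.norm_eq_tsum_rpow hPpos, hPt]
      congr 1
      apply tsum_congr
      intro p
      rw [dDelta_sub]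
      simp [hFdef, Real.norm_eq_abs, dDelta_dSum, Pi.sub_apply]
      rfl
    simp only [key]
    exact (tendsto_iff_norm_sub_tendsto_zero.mp hG)
end

section
/- If z : ℕ × ℕ → ℝ is such that Σ_{k,l} |z_{kl} x_{kl}| < ∞ for every double sequence x with Δx bounded, then Σ_{k,l} |z_{kl}| < ∞. (Hence the α-dual of M_u(Δ) equals L_u.) -/
theorem alphaDual_MuDelta_subset_Lu (z : ℕ → ℕ → ℝ)
    (hz : ∀ x : ℕ → ℕ → ℝ, (∃ K : ℝ, ∀ m n : ℕ, |dDelta x m n| ≤ K) →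
      Summable fun p : ℕ × ℕ => |z p.1 p.2 * x p.1 p.2|) :
    Summable fun p : ℕ × ℕ => |z p.1 p.2| := by
  have h := hz (fun _ _ => 1) ⟨1, by
    intro m n
    simp only [dDelta]
    rcases eq_or_ne m 0 with hm | hm <;> rcases eq_or_ne n 0 with hn | hn <;>
      simp [hm, hn]⟩
  simpa using h
end

section
/- If a double sequence x : ℕ × ℕ → ℝ is regularly convergent (it converges in the Pringsheim sense and, for each fixed m, lim_{n→∞} x_{mn} exists, and for each fixed n, lim_{m→∞} x_{mn} exists), then its difference transform Δx is regularly convergent with Pringsheim limit 0. -/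
private lemma shift_tendsto {f : ℕ → ℝ} {L : ℝ}
    (h : Filter.Tendsto f Filter.atTop (nhds L)) :
    Filter.Tendsto (fun n => f (n - 1)) Filter.atTop (nhds L) :=
  h.comp (Filter.tendsto_sub_atTop_nat 1)

theorem regular_delta_regular (x : ℕ → ℕ → ℝ)
    (hp : ∃ l : ℝ, PrTendsto x l)
    (hrow : ∀ m : ℕ, ∃ L : ℝ, Filter.Tendsto (fun n => x m n) Filter.atTop (nhds L))
    (hcol : ∀ n : ℕ, ∃ L : ℝ, Filter.Tendsto (fun m => x m n) Filter.atTop (nhds L)) :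
    PrTendsto (dDelta x) 0 ∧
    (∀ m : ℕ, ∃ L : ℝ, Filter.Tendsto (fun n => dDelta x m n) Filter.atTop (nhds L)) ∧
    (∀ n : ℕ, ∃ L : ℝ, Filter.Tendsto (fun m => dDelta x m n) Filter.atTop (nhds L)) := by
  obtain ⟨l, hl⟩ := hp
  refine ⟨?_, ?_, ?_⟩
  · intro ε hε
    obtain ⟨N, hN⟩ := hl (ε / 4) (by linarith)
    refine ⟨N + 1, fun m n hm hn => ?_⟩
    have hm0 : m ≠ 0 := by omega
    have hn0 : n ≠ 0 := by omega
    have h1 := hN m n (by omega) (by omega)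
    have h2 := hN m (n - 1) (by omega) (by omega)
    have h3 := hN (m - 1) n (by omega) (by omega)
    have h4 := hN (m - 1) (n - 1) (by omega) (by omega)
    have heq : dDelta x m n - 0 =
        (x m n - l) - (x m (n - 1) - l) - (x (m - 1) n - l) + (x (m - 1) (n - 1) - l) := by
      simp [dDelta, hm0, hn0]; ring
    rw [heq, abs_lt]
    have a1 := abs_lt.mp h1
    have a2 := abs_lt.mp h2
    have a3 := abs_lt.mp h3
    have a4 := abs_lt.mp h4
    constructor <;> linarith [a1.1, a1.2, a2.1, a2.2, a3.1, a3.2, a4.1, a4.2]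
  · intro m
    obtain ⟨Lm, hLm⟩ := hrow m
    rcases Nat.eq_zero_or_pos m with hm | hm
    · subst hm
      refine ⟨0, Filter.Tendsto.congr' ?_ (by simpa using hLm.sub (shift_tendsto hLm))⟩
      filter_upwards [Filter.eventually_ge_atTop 1] with n hn
      have hn0 : n ≠ 0 := by omega
      simp [dDelta, hn0]
    · obtain ⟨Lm', hLm'⟩ := hrow (m - 1)
      have ht := ((hLm.sub (shift_tendsto hLm)).sub hLm').add (shift_tendsto hLm')
      have : Lm - Lm - Lm' + Lm' = 0 := by ring
      rw [this] at ht
      refine ⟨0, Filter.Tendsto.congr' ?_ ht⟩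
      filter_upwards [Filter.eventually_ge_atTop 1] with n hn
      have hn0 : n ≠ 0 := by omega
      simp [dDelta, hn0, hm.ne']
  · intro n
    obtain ⟨Mn, hMn⟩ := hcol n
    rcases Nat.eq_zero_or_pos n with hn | hn
    · subst hn
      refine ⟨0, Filter.Tendsto.congr' ?_ (by simpa using hMn.sub (shift_tendsto hMn))⟩
      filter_upwards [Filter.eventually_ge_atTop 1] with m hm
      have hm0 : m ≠ 0 := by omega
      simp [dDelta, hm0]
    · obtain ⟨Mn', hMn'⟩ := hcol (n - 1)
      have ht := ((hMn.sub hMn').sub (shift_tendsto hMn)).add (shift_tendsto hMn')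
      have : Mn - Mn' - Mn + Mn' = 0 := by ring
      rw [this] at ht
      refine ⟨0, Filter.Tendsto.congr' ?_ ht⟩
      filter_upwards [Filter.eventually_ge_atTop 1] with m hm
      have hm0 : m ≠ 0 := by omega
      simp [dDelta, hm0, hn.ne']
end

section
/- For every bounded double sequence y : ℕ × ℕ → ℝ, the double sequence x defined by x_{jk} = Σ_{m=0}^{j} Σ_{n=0}^{k} y_{mn} satisfies Δx = y and sup_{j,k}|(Δx)_{jk}| = sup_{j,k}|y_{jk}|; hence the map y ↦ x is a norm-preserving linear bijection from M_u onto M_u(Δ). -/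
lemma rowsum (x : ℕ → ℕ → ℝ) (m k : ℕ) :
    ∑ n ∈ Finset.range (k + 1), dDelta x m n
      = x m k - (if m = 0 then 0 else x (m - 1) k) := by
  induction k with
  | zero => by_cases hm : m = 0 <;> simp [dDelta, hm]
  | succ k ih =>
      rw [Finset.sum_range_succ, ih]
      by_cases hm : m = 0 <;> simp [dDelta, hm] <;> ring

lemma dsum_ddelta (x : ℕ → ℕ → ℝ) (j k : ℕ) : dSum (dDelta x) j k = x j k := by
  induction j with
  | zero => simp [dSum, rowsum]
  | succ j ih =>
      rw [dSum, Finset.sum_range_succ]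
      have : ∑ m ∈ Finset.range (j + 1), ∑ n ∈ Finset.range (k + 1), dDelta x m n = x j k := ih
      rw [this, rowsum]
      simp

lemma ddelta_dsum (y : ℕ → ℕ → ℝ) (j k : ℕ) : dDelta (dSum y) j k = y j k := by
  rcases j with _ | j <;> rcases k with _ | k <;>
    simp [dDelta, dSum, Finset.sum_range_succ] <;> ring

theorem sum_inverse_norm_preserving (y : ℕ → ℕ → ℝ)
    (hy : ∃ K : ℝ, ∀ m n : ℕ, |y m n| ≤ K) :
    (∀ j k : ℕ, dDelta (dSum y) j k = y j k) ∧
    (⨆ p : ℕ × ℕ, |dDelta (dSum y) p.1 p.2|) = (⨆ p : ℕ × ℕ, |y p.1 p.2|) ∧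
    (∀ x : ℕ → ℕ → ℝ, (∃ K : ℝ, ∀ m n : ℕ, |dDelta x m n| ≤ K) →
      x = dSum (dDelta x)) ∧
    (∀ (a : ℝ) (u v : ℕ → ℕ → ℝ) (j k : ℕ),
      dSum (fun i l => a * u i l + v i l) j k = a * dSum u j k + dSum v j k) := by
  refine ⟨ddelta_dsum y, ?_, ?_, ?_⟩
  · exact congrArg _ (funext fun p => by rw [ddelta_dsum])
  · intro x _
    funext j k
    exact (dsum_ddelta x j k).symm
  · intro a u v j k
    simp [dSum, Finset.mul_sum, Finset.sum_add_distrib]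
end
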